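/- Let f, g, h: ℝ^n → ℝ ∪ {∞} be proper, convex and lsc and let 0 < γ < 1 < δ. Define Ψ(s,t) = g^γ(s) − f^δ(t) − h^{γδ/(δ−γ)}((δs − γt)/(δ − γ)) + (1/(2(δ−γ)))‖s − t‖². Then Ψ is differentiable on ℝ^n × ℝ^n, and one iteration u = prox_{(γδ/(δ−γ))h}((δs − γt)/(δ − γ)), v = prox_{γg}(s), z = prox_{δf}(t), s⁺ = s + λ(v − u), t⁺ = t + μ(u − z) satisfies (s⁺, t⁺) = (s, t) − (γλ∇_sΨ(s,t), δμ∇_tΨ(s,t)). -/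

import Mathlib

open scoped InnerProductSpace
noncomputable section

/-- `ℝ^p` as a Euclidean space. -/
abbrev Euc (p : ℕ) := EuclideanSpace ℝ (Fin p)

variable {p : ℕ}

/-- `f : ℝ^p → ℝ ∪ {∞}` (modelled with `EReal` values never equal to `-∞`) is proper. -/
def ProperFun (f : Euc p → EReal) : Prop :=
  (∀ x, f x ≠ ⊥) ∧ (∃ x, f x ≠ ⊤)

/-- Convexity for extended-real-valued functions. -/
def ConvexFun (f : Euc p → EReal) : Prop :=
  ∀ x y : Euc p, ∀ t : ℝ, 0 ≤ t → t ≤ 1 →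
    f (t • x + (1 - t) • y) ≤ (t : EReal) * f x + ((1 - t : ℝ) : EReal) * f y

/-- The convex subdifferential `∂f(x)`. -/
def Subdiff (f : Euc p → EReal) (x : Euc p) : Set (Euc p) :=
  {v | ∀ z, f x + ((⟪v, z - x⟫_ℝ : ℝ) : EReal) ≤ f z}

/-- `u` minimizes `w ↦ f(w) + (1/(2γ))‖w − x‖²`. -/
def ProxObjMin (f : Euc p → EReal) (γ : ℝ) (x u : Euc p) : Prop :=
  ∀ w, f u + ((1/(2*γ) * ‖u - x‖^2 : ℝ) : EReal) ≤ f w + ((1/(2*γ) * ‖w - x‖^2 : ℝ) : EReal)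

/-- `u = prox_{γf}(x)`: `u` is the unique minimizer of `w ↦ f(w) + (1/(2γ))‖w − x‖²`. -/
def IsProxOf (f : Euc p → EReal) (γ : ℝ) (x u : Euc p) : Prop :=
  ProxObjMin f γ x u ∧ ∀ w, ProxObjMin f γ x w → w = u

/-- The Moreau envelope `f^γ(x) = inf_w { f(w) + (1/(2γ))‖w − x‖² }`, as an extended real. -/
def moreau (f : Euc p → EReal) (γ : ℝ) (x : Euc p) : EReal :=
  ⨅ w : Euc p, f w + ((1/(2*γ) * ‖w - x‖^2 : ℝ) : EReal)

/-- The (real-valued) Moreau envelope. -/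
def moreauR (f : Euc p → EReal) (γ : ℝ) (x : Euc p) : ℝ := (moreau f γ x).toReal

/-- The DC envelope `φ_γ = g^γ − h^γ`. -/
def dce (g h : Euc p → EReal) (γ : ℝ) (s : Euc p) : ℝ := moreauR g γ s - moreauR h γ s

/-- The DC function `φ = g − h`, with the convention `∞ − ∞ = ∞`. -/
def dcVal (g h : Euc p → EReal) (x : Euc p) : EReal :=
  if g x = ⊤ then ⊤ else g x - h x

/-- The function `Ψ(s,t) = g^γ(s) − f^δ(t) − h^{γδ/(δ−γ)}((δs − γt)/(δ − γ))
  + (1/(2(δ−γ)))‖s − t‖²`. -/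
def Psi (f g h : Euc p → EReal) (γ δ : ℝ) (s t : Euc p) : ℝ :=
  moreauR g γ s - moreauR f δ t
    - moreauR h (γ*δ/(δ-γ)) ((δ - γ)⁻¹ • (δ • s - γ • t))
    + 1/(2*(δ-γ)) * ‖s - t‖^2

/-!
Each Moreau envelope `e = f^γ` is differentiable with `∇e(x) = (x - prox_{γf}(x)) / γ`.
Indeed `e` is convex (an infimal convolution of convex functions), and with `u = prox_{γf}(x)`
the competitor `u` in the infimum defining `e(y)` gives the quadratic upper model
`e(y) ≤ e(x) + ⟪(x - u)/γ, y - x⟫ + ‖y - x‖²/(2γ)`; reflecting `y` through `x` and using convexity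
turns it into the matching lower bound. Prox points exist because a proper convex lsc function
grows at least like `c - A‖w‖`, which makes the prox objective coercive.

The chain rule then gives `∇_sΨ = (u - v)/γ` and `∇_tΨ = (z - u)/δ`: the parameter
`γδ/(δ-γ)` of the `h`-envelope and the weight `1/(2(δ-γ))` of the quadratic term are exactly
those for which the `s`- and `t`-terms cancel.
-/

open Filter Topology Asymptotics

section GradientCalculus

variable {E : Type*} [NormedAddCommGroup E] [InnerProductSpace ℝ E] [CompleteSpace E]
  {φ ψ : E → ℝ} {g g' x : E}

theorem HasGradientAt.add (hφ : HasGradientAt φ g x) (hψ : HasGradientAt ψ g' x) :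
    HasGradientAt (fun y => φ y + ψ y) (g + g') x := by
  have := (hasGradientAt_iff_hasFDerivAt.1 hφ).add (hasGradientAt_iff_hasFDerivAt.1 hψ)
  rw [← map_add] at this
  exact hasGradientAt_iff_hasFDerivAt.2 this

theorem HasGradientAt.sub (hφ : HasGradientAt φ g x) (hψ : HasGradientAt ψ g' x) :
    HasGradientAt (fun y => φ y - ψ y) (g - g') x := by
  have := (hasGradientAt_iff_hasFDerivAt.1 hφ).sub (hasGradientAt_iff_hasFDerivAt.1 hψ)
  rw [← map_sub] at this
  exact hasGradientAt_iff_hasFDerivAt.2 this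

theorem HasGradientAt.const_mul (c : ℝ) (hφ : HasGradientAt φ g x) :
    HasGradientAt (fun y => c * φ y) (c • g) x := by
  have := (hasGradientAt_iff_hasFDerivAt.1 hφ).const_mul c
  rw [← map_smul] at this
  exact hasGradientAt_iff_hasFDerivAt.2 this

theorem HasGradientAt.comp_smul_add (a : ℝ) (b : E) (hφ : HasGradientAt φ g (a • x + b)) :
    HasGradientAt (fun y => φ (a • y + b)) (a • g) x := by
  refine hasGradientAt_iff_hasFDerivAt.2 (((hasGradientAt_iff_hasFDerivAt.1 hφ).comp x
    (((hasFDerivAt_id x).const_smul a).add_const b)).congr_fderiv ?_)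
  ext y
  simp

theorem hasGradientAt_norm_sub_sq (a x : E) :
    HasGradientAt (fun y => ‖y - a‖ ^ 2) ((2 : ℝ) • (x - a)) x := by
  refine hasGradientAt_iff_hasFDerivAt.2
    ((((hasFDerivAt_id x).sub_const a).norm_sq).congr_fderiv ?_)
  ext y
  simp

theorem hasGradientAt_of_abs_sub_inner_le_sq {C : ℝ}
    (h : ∀ y, |φ y - φ x - ⟪g, y - x⟫_ℝ| ≤ C * ‖y - x‖ ^ 2) : HasGradientAt φ g x := by
  rw [hasGradientAt_iff_isLittleO]
  have hbig : (fun y => φ y - φ x - ⟪g, y - x⟫_ℝ) =O[𝓝 x] fun y => ‖y - x‖ ^ 2 :=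
    IsBigO.of_bound C <| Eventually.of_forall fun y => by
      simpa [Real.norm_eq_abs] using h y
  have hsmall : (fun y => ‖y - x‖ ^ 2) =o[𝓝 x] fun y => y - x :=
    (isLittleO_norm_pow_id one_lt_two).comp_tendsto
      (tendsto_sub_nhds_zero_iff.2 tendsto_id)
  exact hbig.trans_isLittleO hsmall

theorem ConvexOn.hasGradientAt_of_le_quadratic (hφ : ConvexOn ℝ Set.univ φ) {C : ℝ}
    (h : ∀ y, φ y ≤ φ x + ⟪g, y - x⟫_ℝ + C * ‖y - x‖ ^ 2) : HasGradientAt φ g x := by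
  refine hasGradientAt_of_abs_sub_inner_le_sq (C := C) fun y => abs_le.2 ⟨?_, by linarith [h y]⟩
  -- `x` is the midpoint of `y` and its reflection `2x - y`
  have hmid := hφ.2 (Set.mem_univ y) (Set.mem_univ ((2 : ℝ) • x - y))
    (by norm_num : (0 : ℝ) ≤ 1 / 2) (by norm_num : (0 : ℝ) ≤ 1 / 2) (by norm_num)
  have e : (1 / 2 : ℝ) • y + (1 / 2 : ℝ) • ((2 : ℝ) • x - y) = x := by module
  have hrefl := h ((2 : ℝ) • x - y)
  have e' : (2 : ℝ) • x - y - x = -(y - x) := by module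
  rw [e, smul_eq_mul, smul_eq_mul] at hmid
  rw [e', inner_neg_right, norm_neg] at hrefl
  linarith

end GradientCalculus

theorem LowerSemicontinuous.exists_forall_le_of_isCompact {α β : Type*} [TopologicalSpace α]
    [LinearOrder β] {F : α → β} (hF : LowerSemicontinuous F) {K : Set α} (hK : IsCompact K)
    {x₀ : α} (hx₀ : x₀ ∈ K) (hout : ∀ w ∉ K, F x₀ ≤ F w) : ∃ u, ∀ w, F u ≤ F w := by
  obtain ⟨u, -, hu⟩ := (hF.lowerSemicontinuousOn K).exists_isMinOn ⟨x₀, hx₀⟩ hK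
  refine ⟨u, fun w => ?_⟩
  by_cases hw : w ∈ K
  · exact hu hw
  · exact (hu hx₀).trans (hout w hw)

section ExtendedRealFunctions

variable {f : Euc p → EReal}

theorem ProperFun.coe_toReal (hp : ProperFun f) {x : Euc p} (hx : f x ≠ ⊤) :
    ((f x).toReal : EReal) = f x :=
  EReal.coe_toReal hx (hp.1 x)

theorem ConvexFun.le_coe {x y : Euc p} {a b t : ℝ} (hc : ConvexFun f) (hx : f x = a)
    (hy : f y = b) (ht₀ : 0 ≤ t) (ht₁ : t ≤ 1) :
    f (t • x + (1 - t) • y) ≤ ((t * a + (1 - t) * b : ℝ) : EReal) := by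
  have := hc x y t ht₀ ht₁
  rw [hx, hy] at this
  exact_mod_cast this

theorem ConvexFun.exists_sub_mul_norm_le (hp : ProperFun f) (hc : ConvexFun f)
    (hl : LowerSemicontinuous f) {x₀ : Euc p} (hx₀ : f x₀ ≠ ⊤) :
    ∃ c A : ℝ, 0 ≤ A ∧ ∀ w, ((c - A * ‖w - x₀‖ : ℝ) : EReal) ≤ f w := by
  have hx₀K : x₀ ∈ Metric.closedBall x₀ 1 := Metric.mem_closedBall_self zero_le_one
  obtain ⟨u₀, -, hu₀⟩ := (hl.lowerSemicontinuousOn _).exists_isMinOn ⟨x₀, hx₀K⟩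
    (isCompact_closedBall x₀ 1)
  set m := (f u₀).toReal
  set a := (f x₀).toReal
  have hm : (m : EReal) = f u₀ := hp.coe_toReal (ne_top_of_le_ne_top hx₀ (hu₀ hx₀K))
  have ha : (a : EReal) = f x₀ := hp.coe_toReal hx₀
  have hma : m ≤ a := by exact_mod_cast hm.trans_le ((hu₀ hx₀K).trans ha.ge)
  refine ⟨m, a - m, sub_nonneg.2 hma, fun w => ?_⟩
  set r := ‖w - x₀‖
  rcases le_or_gt r 1 with hr | hr
  · calc ((m - (a - m) * r : ℝ) : EReal) ≤ m := by
          exact_mod_cast sub_le_self m (mul_nonneg (sub_nonneg.2 hma) (norm_nonneg _))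
      _ = f u₀ := hm
      _ ≤ f w := hu₀ (by rwa [Metric.mem_closedBall, dist_eq_norm])
  obtain hw | hw := eq_or_ne (f w) ⊤
  · simp [hw]
  -- compare with the point where the segment from `x₀` to `w` leaves the unit ball
  have hr₀ : 0 < r := one_pos.trans hr
  set b := (f w).toReal
  have hy : r⁻¹ • w + (1 - r⁻¹) • x₀ ∈ Metric.closedBall x₀ 1 := by
    have e : r⁻¹ • w + (1 - r⁻¹) • x₀ - x₀ = r⁻¹ • (w - x₀) := by module
    rw [Metric.mem_closedBall, dist_eq_norm, e, norm_smul, Real.norm_eq_abs,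
      abs_of_pos (inv_pos.2 hr₀), inv_mul_cancel₀ hr₀.ne']
  have hmb : m ≤ r⁻¹ * b + (1 - r⁻¹) * a := by
    exact_mod_cast hm.trans_le <| (hu₀ hy).trans
      (hc.le_coe (hp.coe_toReal hw).symm ha.symm (inv_nonneg.2 hr₀.le)
        (inv_le_one_of_one_le₀ hr.le))
  have hrb : r * m ≤ b + (r - 1) * a :=
    calc r * m ≤ r * (r⁻¹ * b + (1 - r⁻¹) * a) := mul_le_mul_of_nonneg_left hmb hr₀.le
      _ = b + (r - 1) * a := by field_simp
  rw [← hp.coe_toReal hw]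
  exact_mod_cast (by nlinarith : m - (a - m) * r ≤ b)

theorem exists_proxObjMin (hp : ProperFun f) (hc : ConvexFun f) (hl : LowerSemicontinuous f)
    {γ : ℝ} (hγ : 0 < γ) (x : Euc p) : ∃ u, ProxObjMin f γ x u := by
  obtain ⟨x₀, hx₀⟩ := hp.2
  obtain ⟨c, A, hA, hcA⟩ := hc.exists_sub_mul_norm_le hp hl hx₀
  set F : Euc p → EReal := fun w => f w + ((1/(2*γ) * ‖w - x‖^2 : ℝ) : EReal)
  have hF : LowerSemicontinuous F := by
    refine hl.add' (continuous_coe_real_ereal.comp (by fun_prop)).lowerSemicontinuous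
      fun w => EReal.continuousAt_add (Or.inr (EReal.coe_ne_bot _)) (Or.inr (EReal.coe_ne_top _))
  set M := (f x₀).toReal + 1/(2*γ) * ‖x₀ - x‖^2
  have hM : F x₀ = M := by simp only [F, M, EReal.coe_add, hp.coe_toReal hx₀]
  set c' := c - A * ‖x - x₀‖
  set D := |M - c'|
  set R := max ‖x₀ - x‖ (max 1 (2*γ*(A + D)))
  refine hF.exists_forall_le_of_isCompact (x₀ := x₀) (isCompact_closedBall x R)
    (by simp [dist_eq_norm, R]) fun w hw => ?_
  set r := ‖w - x‖
  have hR : R < r := by rwa [Metric.mem_closedBall, dist_eq_norm, not_le] at hw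
  have hr₁ : 1 < r := (le_max_left _ _).trans_lt ((le_max_right _ _).trans_lt hR)
  have hrD : 2*γ*(A + D) < r := (le_max_right _ _).trans_lt ((le_max_right _ _).trans_lt hR)
  have hlin : c' - A * r ≤ c - A * ‖w - x₀‖ := by
    have := mul_le_mul_of_nonneg_left (norm_sub_le_norm_sub_add_norm_sub w x x₀) hA
    linarith
  have hquad : M ≤ c' - A * r + 1/(2*γ) * r^2 := by
    have h1 : (A + D) * r ≤ 1/(2*γ) * r^2 := by
      rw [div_mul_eq_mul_div, one_mul, le_div_iff₀ (by positivity)]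
      nlinarith [mul_le_mul_of_nonneg_right hrD.le (zero_le_one.trans hr₁.le)]
    have h2 : D ≤ D * r := le_mul_of_one_le_right (abs_nonneg _) hr₁.le
    linarith [le_abs_self (M - c')]
  rw [hM]
  calc (M : EReal) ≤ ((c' - A * r : ℝ) : EReal) + ((1/(2*γ) * r^2 : ℝ) : EReal) := by
        exact_mod_cast hquad
    _ ≤ F w := add_le_add (le_trans (by exact_mod_cast hlin) (hcA w)) le_rfl

theorem ProxObjMin.ne_top (hp : ProperFun f) {γ : ℝ} {x u : Euc p} (hu : ProxObjMin f γ x u) :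
    f u ≠ ⊤ := by
  obtain ⟨x₀, hx₀⟩ := hp.2
  intro htop
  have := hu x₀
  rw [htop, EReal.top_add_coe, top_le_iff] at this
  exact (EReal.add_lt_top hx₀ (EReal.coe_ne_top _)).ne this

theorem ProxObjMin.moreauR_eq (hp : ProperFun f) {γ : ℝ} {x u : Euc p}
    (hu : ProxObjMin f γ x u) : moreauR f γ x = (f u).toReal + 1/(2*γ) * ‖u - x‖^2 := by
  have hmin : moreau f γ x = f u + ((1/(2*γ) * ‖u - x‖^2 : ℝ) : EReal) :=
    le_antisymm (iInf_le _ u) (le_iInf hu)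
  rw [moreauR, hmin, ← hp.coe_toReal (hu.ne_top hp), ← EReal.coe_add, EReal.toReal_coe,
    EReal.toReal_coe]

theorem ProxObjMin.moreauR_le (hp : ProperFun f) {γ : ℝ} {x u w : Euc p}
    (hu : ProxObjMin f γ x u) (hw : f w ≠ ⊤) :
    moreauR f γ x ≤ (f w).toReal + 1/(2*γ) * ‖w - x‖^2 := by
  have := hu w
  rw [← hp.coe_toReal (hu.ne_top hp), ← hp.coe_toReal hw] at this
  rw [hu.moreauR_eq hp]
  exact_mod_cast this

theorem convexOn_moreauR (hp : ProperFun f) (hc : ConvexFun f) (hl : LowerSemicontinuous f)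
    {γ : ℝ} (hγ : 0 < γ) : ConvexOn ℝ Set.univ (moreauR f γ) := by
  refine ⟨convex_univ, fun x₁ _ x₂ _ a b ha hb hab => ?_⟩
  obtain rfl : b = 1 - a := by linarith
  obtain ⟨u₁, hu₁⟩ := exists_proxObjMin hp hc hl hγ x₁
  obtain ⟨u₂, hu₂⟩ := exists_proxObjMin hp hc hl hγ x₂
  obtain ⟨u, hu⟩ := exists_proxObjMin hp hc hl hγ (a • x₁ + (1 - a) • x₂)
  set w := a • u₁ + (1 - a) • u₂
  have hfw : f w ≤ ((a * (f u₁).toReal + (1 - a) * (f u₂).toReal : ℝ) : EReal) :=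
    hc.le_coe (hp.coe_toReal (hu₁.ne_top hp)).symm (hp.coe_toReal (hu₂.ne_top hp)).symm ha
      (by linarith)
  have hw : f w ≠ ⊤ := ne_top_of_le_ne_top (EReal.coe_ne_top _) hfw
  have hfw' : (f w).toReal ≤ a * (f u₁).toReal + (1 - a) * (f u₂).toReal := by
    exact_mod_cast (hp.coe_toReal hw).trans_le hfw
  have hnorm : ‖w - (a • x₁ + (1 - a) • x₂)‖^2 ≤ a * ‖u₁ - x₁‖^2 + (1 - a) * ‖u₂ - x₂‖^2 := by
    have e : w - (a • x₁ + (1 - a) • x₂) = a • (u₁ - x₁) + (1 - a) • (u₂ - x₂) := by module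
    rw [e]
    exact ((convexOn_norm convex_univ).pow (fun _ _ => norm_nonneg _) 2).2 (Set.mem_univ _)
      (Set.mem_univ _) ha hb (by ring)
  rw [smul_eq_mul, smul_eq_mul, hu₁.moreauR_eq hp, hu₂.moreauR_eq hp]
  calc moreauR f γ (a • x₁ + (1 - a) • x₂)
      ≤ (f w).toReal + 1/(2*γ) * ‖w - (a • x₁ + (1 - a) • x₂)‖^2 := hu.moreauR_le hp hw
    _ ≤ _ := by
      have := mul_le_mul_of_nonneg_left hnorm (by positivity : (0 : ℝ) ≤ 1/(2*γ))
      linarith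

theorem ProxObjMin.moreauR_le_quadratic (hp : ProperFun f) (hc : ConvexFun f)
    (hl : LowerSemicontinuous f) {γ : ℝ} (hγ : 0 < γ) {x u : Euc p} (hu : ProxObjMin f γ x u)
    (y : Euc p) :
    moreauR f γ y ≤ moreauR f γ x + ⟪γ⁻¹ • (x - u), y - x⟫_ℝ + 1/(2*γ) * ‖y - x‖^2 := by
  obtain ⟨u', hu'⟩ := exists_proxObjMin hp hc hl hγ y
  have e : ‖u - y‖^2 = ‖u - x‖^2 + 2 * ⟪x - u, y - x⟫_ℝ + ‖y - x‖^2 := by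
    rw [show u - y = (u - x) - (y - x) by abel, norm_sub_sq_real, ← neg_sub x u, inner_neg_left]
    ring
  rw [hu.moreauR_eq hp, real_inner_smul_left]
  calc moreauR f γ y ≤ (f u).toReal + 1/(2*γ) * ‖u - y‖^2 := hu'.moreauR_le hp (hu.ne_top hp)
    _ = _ := by rw [e]; field_simp; ring

theorem ProxObjMin.hasGradientAt_moreauR (hp : ProperFun f) (hc : ConvexFun f)
    (hl : LowerSemicontinuous f) {γ : ℝ} (hγ : 0 < γ) {x u : Euc p} (hu : ProxObjMin f γ x u) :
    HasGradientAt (moreauR f γ) (γ⁻¹ • (x - u)) x :=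
  (convexOn_moreauR hp hc hl hγ).hasGradientAt_of_le_quadratic
    (hu.moreauR_le_quadratic hp hc hl hγ)

theorem differentiable_moreauR (hp : ProperFun f) (hc : ConvexFun f)
    (hl : LowerSemicontinuous f) {γ : ℝ} (hγ : 0 < γ) : Differentiable ℝ (moreauR f γ) :=
  fun x => (exists_proxObjMin hp hc hl hγ x).elim fun _ hu =>
    (hu.hasGradientAt_moreauR hp hc hl hγ).differentiableAt

end ExtendedRealFunctions

section Psi

variable {f g h : Euc p → EReal} {γ δ : ℝ} {s t u v z : Euc p}

theorem hasGradientAt_Psi_left (hg_proper : ProperFun g) (hg_convex : ConvexFun g)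
    (hg_lsc : LowerSemicontinuous g) (hh_proper : ProperFun h) (hh_convex : ConvexFun h)
    (hh_lsc : LowerSemicontinuous h) (hγ : 0 < γ) (hγδ : γ < δ)
    (hu : ProxObjMin h (γ*δ/(δ-γ)) ((δ - γ)⁻¹ • (δ • s - γ • t)) u)
    (hv : ProxObjMin g γ s v) :
    HasGradientAt (fun s' => Psi f g h γ δ s' t) (γ⁻¹ • (u - v)) s := by
  have hδγ : 0 < δ - γ := sub_pos.2 hγδ
  have hδ : 0 < δ := hγ.trans hγδ
  have hρ : 0 < γ*δ/(δ-γ) := by positivity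
  have hw : ∀ s' : Euc p, (δ - γ)⁻¹ • (δ • s' - γ • t)
      = ((δ - γ)⁻¹ * δ) • s' + (-((δ - γ)⁻¹ * γ)) • t := fun s' => by module
  have hh := hu.hasGradientAt_moreauR hh_proper hh_convex hh_lsc hρ
  rw [hw] at hh
  have := (((hv.hasGradientAt_moreauR hg_proper hg_convex hg_lsc hγ).sub
    (hasGradientAt_const s (moreauR f δ t))).sub (hh.comp_smul_add _ _)).add
    ((hasGradientAt_norm_sub_sq t s).const_mul (1/(2*(δ-γ))))
  simp only [← hw] at this
  unfold Psi
  convert this using 1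
  match_scalars <;> field_simp <;> ring

theorem hasGradientAt_Psi_right (hf_proper : ProperFun f) (hf_convex : ConvexFun f)
    (hf_lsc : LowerSemicontinuous f) (hh_proper : ProperFun h) (hh_convex : ConvexFun h)
    (hh_lsc : LowerSemicontinuous h) (hγ : 0 < γ) (hγδ : γ < δ)
    (hu : ProxObjMin h (γ*δ/(δ-γ)) ((δ - γ)⁻¹ • (δ • s - γ • t)) u)
    (hz : ProxObjMin f δ t z) :
    HasGradientAt (fun t' => Psi f g h γ δ s t') (δ⁻¹ • (z - u)) t := by
  have hδγ : 0 < δ - γ := sub_pos.2 hγδ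
  have hδ : 0 < δ := hγ.trans hγδ
  have hρ : 0 < γ*δ/(δ-γ) := by positivity
  have hw : ∀ t' : Euc p, (δ - γ)⁻¹ • (δ • s - γ • t')
      = (-((δ - γ)⁻¹ * γ)) • t' + ((δ - γ)⁻¹ * δ) • s := fun t' => by module
  have hh := hu.hasGradientAt_moreauR hh_proper hh_convex hh_lsc hρ
  rw [hw] at hh
  have := (((hasGradientAt_const t (moreauR g γ s)).sub
    (hz.hasGradientAt_moreauR hf_proper hf_convex hf_lsc hδ)).sub (hh.comp_smul_add _ _)).add
    ((hasGradientAt_norm_sub_sq s t).const_mul (1/(2*(δ-γ))))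
  simp only [← hw, norm_sub_rev _ s] at this
  unfold Psi
  convert this using 1
  match_scalars <;> field_simp <;> ring

theorem differentiable_Psi (hf_proper : ProperFun f) (hf_convex : ConvexFun f)
    (hf_lsc : LowerSemicontinuous f) (hg_proper : ProperFun g) (hg_convex : ConvexFun g)
    (hg_lsc : LowerSemicontinuous g) (hh_proper : ProperFun h) (hh_convex : ConvexFun h)
    (hh_lsc : LowerSemicontinuous h) (hγ : 0 < γ) (hγδ : γ < δ) :
    Differentiable ℝ (fun q : Euc p × Euc p => Psi f g h γ δ q.1 q.2) := by
  have hδγ : 0 < δ - γ := sub_pos.2 hγδ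
  have hδ : 0 < δ := hγ.trans hγδ
  have hf := differentiable_moreauR hf_proper hf_convex hf_lsc hδ
  have hg := differentiable_moreauR hg_proper hg_convex hg_lsc hγ
  have hh := differentiable_moreauR hh_proper hh_convex hh_lsc (by positivity : 0 < γ*δ/(δ-γ))
  have hq : Differentiable ℝ fun q : Euc p × Euc p => ‖q.1 - q.2‖ ^ 2 :=
    (differentiable_fst.sub differentiable_snd).norm_sq ℝ
  unfold Psi
  fun_prop

end Psi

/-- `Ψ` is differentiable, and one iteration
`u = prox_{(γδ/(δ−γ))h}((δs − γt)/(δ − γ))`, `v = prox_{γg}(s)`, `z = prox_{δf}(t)`,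
`s⁺ = s + λ(v − u)`, `t⁺ = t + μ(u − z)` is the (scaled) gradient step
`(s⁺, t⁺) = (s, t) − (γλ∇_sΨ(s,t), δμ∇_tΨ(s,t))`. -/
theorem statement18
    (f g h : Euc p → EReal)
    (hf_proper : ProperFun f) (hf_convex : ConvexFun f) (hf_lsc : LowerSemicontinuous f)
    (hg_proper : ProperFun g) (hg_convex : ConvexFun g) (hg_lsc : LowerSemicontinuous g)
    (hh_proper : ProperFun h) (hh_convex : ConvexFun h) (hh_lsc : LowerSemicontinuous h)
    (γ δ : ℝ) (hγ : 0 < γ) (hγ1 : γ < 1) (hδ : 1 < δ)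
    (lam mu : ℝ)
    (s t u v z splus tplus : Euc p)
    (hu : IsProxOf h (γ*δ/(δ-γ)) ((δ - γ)⁻¹ • (δ • s - γ • t)) u)
    (hv : IsProxOf g γ s v)
    (hz : IsProxOf f δ t z)
    (hsplus : splus = s + lam • (v - u))
    (htplus : tplus = t + mu • (u - z)) :
    Differentiable ℝ (fun q : Euc p × Euc p => Psi f g h γ δ q.1 q.2) ∧
      splus = s - (γ * lam) • gradient (fun s' => Psi f g h γ δ s' t) s ∧
      tplus = t - (δ * mu) • gradient (fun t' => Psi f g h γ δ s t') t := by
  have hγδ : γ < δ := hγ1.trans hδ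
  refine ⟨differentiable_Psi hf_proper hf_convex hf_lsc hg_proper hg_convex hg_lsc hh_proper
    hh_convex hh_lsc hγ hγδ, ?_, ?_⟩
  · rw [(hasGradientAt_Psi_left hg_proper hg_convex hg_lsc hh_proper hh_convex hh_lsc hγ hγδ
      hu.1 hv.1).gradient, hsplus, smul_smul, mul_comm γ lam, mul_inv_cancel_right₀ hγ.ne']
    module
  · rw [(hasGradientAt_Psi_right hf_proper hf_convex hf_lsc hh_proper hh_convex hh_lsc hγ hγδ
      hu.1 hz.1).gradient, htplus, smul_smul, mul_comm δ mu,
      mul_inv_cancel_right₀ (hγ.trans hγδ).ne']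
    module
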